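/- Let n ∈ ℕ, let Ω ⊆ ℝⁿ be a bounded open set, let 1 < p, q < ∞ with 1/p + 1/q = 1, let f ∈ L^q(Ω), and let ρ : ℝⁿ \ {0} → [0,∞) satisfy (H0). Assume the Poincaré inequality: there is c > 0 with ‖u‖_{L^p(Ω)} ≤ c ‖g‖_{L^p(ℝⁿ;ℝⁿ)} for all (u, g) ∈ X_ρ^p(Ω). If (u₁, g₁) and (u₂, g₂) in X_ρ^p(Ω) both satisfy ∫_{ℝⁿ} |gᵢ|^{p−2} gᵢ · h dx = ∫_Ω f v dx for every (v, h) ∈ X_ρ^p(Ω) (i = 1, 2), then u₁ = u₂ a.e. in ℝⁿ and g₁ = g₂ a.e. in ℝⁿ. -/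

import Mathlib

open MeasureTheory Metric

noncomputable section

/-- `n`-dimensional Euclidean space. -/
abbrev Euc (n : ℕ) := EuclideanSpace ℝ (Fin n)

/-- The nonlocal divergence with kernel `ρ`. -/
def nlDiv (n : ℕ) (ρ : Euc n → ℝ) (v : Euc n → Euc n) (x : Euc n) : ℝ :=
  ∫ y : Euc n, ((inner ℝ (v x - v y) (x - y) : ℝ) * ρ (x - y)) / ‖x - y‖ ^ 2

/-- Hypothesis (H0) on the kernel `ρ`. -/
def H0 (n : ℕ) (ρ : Euc n → ℝ) (ρb : ℝ → ℝ) (ε : ℝ) : Prop :=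
  (∀ x, ρ x = ρb ‖x‖) ∧
  (∀ x : Euc n, x ≠ 0 → 0 ≤ ρ x) ∧
  LocallyIntegrable ρ volume ∧
  Integrable (fun x : Euc n => min 1 ‖x‖⁻¹ * ρ x) volume ∧
  ∃ c > (0 : ℝ), ∀ x ∈ closedBall (0 : Euc n) ε, x ≠ 0 → c ≤ ρ x

/-- Membership in the nonlocal Sobolev space `X_ρ^p(Ω) ≅ H_0^{ρ,p}(Ω)`. -/
def memX (n : ℕ) (p : ℝ) (ρ : Euc n → ℝ) (Ω : Set (Euc n))
    (u : Euc n → ℝ) (g : Euc n → Euc n) : Prop :=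
  MemLp u (ENNReal.ofReal p) volume ∧
  MemLp g (ENNReal.ofReal p) volume ∧
  (∀ᵐ x : Euc n, x ∉ Ω → u x = 0) ∧
  ∀ φ : Euc n → Euc n, ContDiff ℝ (⊤ : ℕ∞) φ → HasCompactSupport φ →
    ∫ x : Euc n, (inner ℝ (g x) (φ x) : ℝ) = - ∫ x : Euc n, u x * nlDiv n ρ φ x

/-!
Testing the equations of both solutions with their difference `(u₁ - u₂, g₁ - g₂)`, which again
lies in `X_ρ^p(Ω)`, and subtracting gives `∫ ⟪|g₁|^{p-2} g₁ - |g₂|^{p-2} g₂, g₁ - g₂⟫ = 0`. The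
integrand is nonnegative and vanishes only where `g₁ = g₂` (strict monotonicity of
`ξ ↦ |ξ|^{p-2} ξ`), so `g₁ = g₂` a.e., and then the Poincaré inequality forces `u₁ = u₂`.
The difference is an admissible test pair because the weak gradient identity is linear as soon
as `u · div_ρ φ` is integrable: `div_ρ φ` is bounded by `max (Lip φ) (2 sup |φ|)` times
`∫ min(1, |z|⁻¹) |ρ(z)| dz`, and `u` is integrable because `Ω` is bounded.
-/

open scoped InnerProductSpace

section

variable {E : Type*} [NormedAddCommGroup E] [InnerProductSpace ℝ E] {p : ℝ}

lemma rpow_sub_rpow_mul_sub_nonneg {a b r : ℝ} (ha : 0 ≤ a) (hb : 0 ≤ b) (hr : 0 ≤ r) :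
    0 ≤ (a ^ r - b ^ r) * (a - b) := by
  rcases le_total a b with hab | hab
  · exact mul_nonneg_of_nonpos_of_nonpos
      (sub_nonpos.2 (Real.rpow_le_rpow ha hab hr)) (sub_nonpos.2 hab)
  · exact mul_nonneg (sub_nonneg.2 (Real.rpow_le_rpow hb hab hr)) (sub_nonneg.2 hab)

lemma eq_of_rpow_sub_rpow_mul_sub_eq_zero {a b r : ℝ} (ha : 0 ≤ a) (hb : 0 ≤ b) (hr : r ≠ 0)
    (h : (a ^ r - b ^ r) * (a - b) = 0) : a = b := by
  rcases mul_eq_zero.1 h with h | h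
  · exact (Real.rpow_left_inj ha hb hr).1 (sub_eq_zero.1 h)
  · exact sub_eq_zero.1 h

lemma rpow_sub_one_eq_rpow_sub_two_mul {s : ℝ} (hs : 0 ≤ s) (hp : p ≠ 1) :
    s ^ (p - 1) = s ^ (p - 2) * s := by
  rw [← Real.rpow_add_one' hs (by contrapose! hp; linarith)]
  ring_nf

lemma pLaplace_monotone_identity (hp : p ≠ 1) (ξ η : E) :
    ‖ξ‖ ^ (p - 2) * ⟪ξ, ξ - η⟫_ℝ - ‖η‖ ^ (p - 2) * ⟪η, ξ - η⟫_ℝ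
      = (‖ξ‖ ^ (p - 1) - ‖η‖ ^ (p - 1)) * (‖ξ‖ - ‖η‖)
        + (‖ξ‖ ^ (p - 2) + ‖η‖ ^ (p - 2)) * (‖ξ‖ * ‖η‖ - ⟪ξ, η⟫_ℝ) := by
  rw [inner_sub_right, inner_sub_right, real_inner_self_eq_norm_sq, real_inner_self_eq_norm_sq,
    real_inner_comm η ξ, rpow_sub_one_eq_rpow_sub_two_mul (norm_nonneg ξ) hp,
    rpow_sub_one_eq_rpow_sub_two_mul (norm_nonneg η) hp]
  ring

lemma pLaplace_monotone (hp : 1 < p) (ξ η : E) :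
    0 ≤ ‖ξ‖ ^ (p - 2) * ⟪ξ, ξ - η⟫_ℝ - ‖η‖ ^ (p - 2) * ⟪η, ξ - η⟫_ℝ := by
  rw [pLaplace_monotone_identity hp.ne']
  exact add_nonneg
    (rpow_sub_rpow_mul_sub_nonneg (norm_nonneg ξ) (norm_nonneg η) (by linarith))
    (mul_nonneg (by positivity) (sub_nonneg.2 (real_inner_le_norm ξ η)))

lemma eq_of_pLaplace_monotone_eq_zero (hp : 1 < p) {ξ η : E}
    (h : ‖ξ‖ ^ (p - 2) * ⟪ξ, ξ - η⟫_ℝ - ‖η‖ ^ (p - 2) * ⟪η, ξ - η⟫_ℝ = 0) : ξ = η := by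
  rw [pLaplace_monotone_identity hp.ne'] at h
  obtain ⟨hnorm, hinner⟩ := (add_eq_zero_iff_of_nonneg
    (rpow_sub_rpow_mul_sub_nonneg (norm_nonneg ξ) (norm_nonneg η) (by linarith))
    (mul_nonneg (by positivity) (sub_nonneg.2 (real_inner_le_norm ξ η)))).1 h
  have hξη : ‖ξ‖ = ‖η‖ :=
    eq_of_rpow_sub_rpow_mul_sub_eq_zero (norm_nonneg ξ) (norm_nonneg η) (by linarith) hnorm
  rcases eq_or_ne ξ 0 with rfl | hξ
  · exact (norm_eq_zero.1 (hξη.symm.trans norm_zero)).symm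
  have hcoeff : 0 < ‖ξ‖ ^ (p - 2) + ‖η‖ ^ (p - 2) := by
    have := Real.rpow_pos_of_pos (norm_pos_iff.2 hξ) (p - 2)
    positivity
  have hcs : ⟪ξ, η⟫_ℝ = ‖ξ‖ * ‖η‖ := by
    have := (mul_eq_zero.1 hinner).resolve_left hcoeff.ne'
    linarith
  rw [inner_eq_norm_mul_iff_real, hξη] at hcs
  exact smul_right_injective E (hξη ▸ norm_ne_zero_iff.2 hξ) hcs

section Integral

variable {α : Type*} [MeasurableSpace α] {μ : Measure α}

lemma integrable_norm_rpow_sub_two_mul_inner (hp : 1 < p) {g k : α → E}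
    (hg : MemLp g (ENNReal.ofReal p) μ) (hk : MemLp k (ENNReal.ofReal p) μ) :
    Integrable (fun x => ‖g x‖ ^ (p - 2) * ⟪g x, k x⟫_ℝ) μ := by
  have hq : MemLp (fun x => ‖g x‖ ^ (p - 1)) (ENNReal.ofReal p.conjExponent) μ := by
    have h := hg.norm_rpow_div (ENNReal.ofReal (p - 1))
    rwa [ENNReal.toReal_ofReal (by linarith), ← ENNReal.ofReal_div_of_pos (by linarith)] at h
  have : ENNReal.HolderConjugate (ENNReal.ofReal p.conjExponent) (ENNReal.ofReal p) :=
    (Real.HolderConjugate.conjExponent hp).symm.ennrealOfReal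
  refine (hq.integrable_mul hk.norm).mono' ?_ (ae_of_all _ fun x => ?_)
  · exact (hg.1.norm.aemeasurable.pow_const _).aestronglyMeasurable.mul (hg.1.inner hk.1)
  · calc ‖‖g x‖ ^ (p - 2) * ⟪g x, k x⟫_ℝ‖
        ≤ ‖g x‖ ^ (p - 2) * (‖g x‖ * ‖k x‖) := by
          rw [norm_mul, Real.norm_of_nonneg (by positivity)]
          gcongr
          exact norm_inner_le_norm _ _
      _ = ‖g x‖ ^ (p - 1) * ‖k x‖ := by
          rw [rpow_sub_one_eq_rpow_sub_two_mul (norm_nonneg _) hp.ne']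
          ring

lemma ae_eq_of_integral_pLaplace_eq (hp : 1 < p) {g₁ g₂ : α → E}
    (h₁ : MemLp g₁ (ENNReal.ofReal p) μ) (h₂ : MemLp g₂ (ENNReal.ofReal p) μ)
    (h : ∫ x, ‖g₁ x‖ ^ (p - 2) * ⟪g₁ x, g₁ x - g₂ x⟫_ℝ ∂μ
      = ∫ x, ‖g₂ x‖ ^ (p - 2) * ⟪g₂ x, g₁ x - g₂ x⟫_ℝ ∂μ) :
    g₁ =ᵐ[μ] g₂ := by
  have hdiff : MemLp (fun x => g₁ x - g₂ x) (ENNReal.ofReal p) μ := h₁.sub h₂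
  have hint₁ := integrable_norm_rpow_sub_two_mul_inner hp h₁ hdiff
  have hint₂ := integrable_norm_rpow_sub_two_mul_inner hp h₂ hdiff
  have hzero : ∫ x, (‖g₁ x‖ ^ (p - 2) * ⟪g₁ x, g₁ x - g₂ x⟫_ℝ
      - ‖g₂ x‖ ^ (p - 2) * ⟪g₂ x, g₁ x - g₂ x⟫_ℝ) ∂μ = 0 := by
    rw [integral_sub hint₁ hint₂, h, sub_self]
  filter_upwards [(integral_eq_zero_iff_of_nonneg (fun x => pLaplace_monotone hp (g₁ x) (g₂ x))
    (hint₁.sub hint₂)).1 hzero] with x hx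
  exact eq_of_pLaplace_monotone_eq_zero hp hx

lemma MeasureTheory.MemLp.integrable_of_ae_notMem_eq_zero {F : Type*} [NormedAddCommGroup F]
    {f : α → F} {q : ENNReal} (hq : 1 ≤ q) (hf : MemLp f q μ) {s : Set α} (hs : μ s ≠ ⊤)
    (h0 : ∀ᵐ x ∂μ, x ∉ s → f x = 0) : Integrable f μ := by
  have : Fact (μ s < ⊤) := ⟨hs.lt_top⟩
  exact IntegrableOn.integrable_of_ae_notMem_eq_zero ((hf.restrict s).integrable hq) h0

lemma MeasureTheory.MemLp.integrable_inner_of_hasCompactSupport [TopologicalSpace α]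
    [SecondCountableTopology α] [OpensMeasurableSpace α] [IsFiniteMeasureOnCompacts μ] {q : ENNReal} (hq : 1 ≤ q)
    {g φ : α → E} (hg : MemLp g q μ) (hφ : Continuous φ) (hφs : HasCompactSupport φ) :
    Integrable (fun x => ⟪g x, φ x⟫_ℝ) μ := by
  obtain ⟨M, hM⟩ := hφ.bounded_above_of_compact_support hφs
  refine MemLp.integrable_of_ae_notMem_eq_zero hq ?_ hφs.isCompact.measure_lt_top.ne
    (ae_of_all _ fun x hx => by simp [image_eq_zero_of_notMem_tsupport hx])
  refine hg.of_le_mul (c := M) (hg.1.inner hφ.aestronglyMeasurable) (ae_of_all _ fun x => ?_)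
  calc ‖⟪g x, φ x⟫_ℝ‖ ≤ ‖g x‖ * ‖φ x‖ := norm_inner_le_norm _ _
    _ ≤ M * ‖g x‖ := by rw [mul_comm]; gcongr; exact hM x

lemma ae_eq_zero_of_setIntegral_abs_rpow_eq_zero [SFinite μ] {u : α → ℝ} (hp : 0 < p)
    (hu : MemLp u (ENNReal.ofReal p) μ) {s : Set α} (hs : ∀ᵐ x ∂μ, x ∉ s → u x = 0)
    (h : ∫ x in s, |u x| ^ p ∂μ = 0) : u =ᵐ[μ] 0 := by
  have hint : IntegrableOn (fun x => |u x| ^ p) s μ := by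
    have := hu.integrable_norm_rpow (by simpa using hp) ENNReal.ofReal_ne_top
    rw [ENNReal.toReal_ofReal hp.le] at this
    exact this.integrableOn
  have h0 := (integral_eq_zero_iff_of_nonneg (fun x => by positivity) hint).1 h
  rw [← Measure.restrict_toMeasurable_of_sFinite,
    Filter.EventuallyEq, ae_restrict_iff' (measurableSet_toMeasurable _ _)] at h0
  filter_upwards [h0, hs] with x hx₁ hx₂
  by_cases hx : x ∈ toMeasurable μ s
  · exact abs_eq_zero.1 ((Real.rpow_eq_zero (abs_nonneg _) hp.ne').1 (hx₁ hx))
  · exact hx₂ fun h => hx (subset_toMeasurable _ _ h)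

end Integral

lemma LipschitzWith.norm_sub_le_mul_min {X F : Type*} [PseudoMetricSpace X]
    [SeminormedAddCommGroup F] {φ : X → F} {L : NNReal} {M : ℝ} (hL : LipschitzWith L φ)
    (hM : ∀ x, ‖φ x‖ ≤ M) (x y : X) :
    ‖φ x - φ y‖ ≤ max (L : ℝ) (2 * M) * min (dist x y) 1 := by
  rcases le_total (dist x y) 1 with h | h
  · rw [min_eq_left h, ← dist_eq_norm]
    calc dist (φ x) (φ y) ≤ L * dist x y := hL.dist_le_mul x y
      _ ≤ _ := by gcongr; exact le_max_left _ _
  · rw [min_eq_right h, mul_one]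
    calc ‖φ x - φ y‖ ≤ ‖φ x‖ + ‖φ y‖ := _root_.norm_sub_le _ _
      _ ≤ 2 * M := by linarith [hM x, hM y]
      _ ≤ _ := le_max_right _ _

lemma norm_inner_mul_div_norm_sq_le {a z : E} {t C : ℝ} (ha : ‖a‖ ≤ C * min ‖z‖ 1) :
    ‖⟪a, z⟫_ℝ * t / ‖z‖ ^ 2‖ ≤ C * ‖min 1 ‖z‖⁻¹ * t‖ := by
  rcases eq_or_ne z 0 with rfl | hz
  · simp
  have hr : 0 < ‖z‖ := norm_pos_iff.2 hz
  have hmin : min ‖z‖ 1 / ‖z‖ = min 1 ‖z‖⁻¹ := by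
    rw [div_eq_mul_inv, min_mul_of_nonneg _ _ (inv_nonneg.2 hr.le), mul_inv_cancel₀ hr.ne',
      one_mul]
  rw [norm_div, norm_mul, norm_mul, norm_pow, norm_norm,
    Real.norm_of_nonneg (le_min zero_le_one (inv_nonneg.2 hr.le)), ← hmin]
  calc ‖⟪a, z⟫_ℝ‖ * ‖t‖ / ‖z‖ ^ 2 ≤ ‖a‖ * ‖z‖ * ‖t‖ / ‖z‖ ^ 2 := by
        gcongr; exact norm_inner_le_norm _ _
    _ = ‖a‖ / ‖z‖ * ‖t‖ := by field_simp
    _ ≤ C * min ‖z‖ 1 / ‖z‖ * ‖t‖ := by gcongr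
    _ = C * (min ‖z‖ 1 / ‖z‖ * ‖t‖) := by ring

section NonlocalDivergence

variable {n : ℕ} {ρ : Euc n → ℝ} {φ : Euc n → Euc n}

lemma aestronglyMeasurable_nlDiv (hρ : AEStronglyMeasurable ρ volume) (hφ : Continuous φ) :
    AEStronglyMeasurable (nlDiv n ρ φ) volume := by
  have hshift : Measure.QuasiMeasurePreserving (fun z : Euc n × Euc n => (z.1 - z.2, z.2))
      (volume.prod volume) (volume.prod volume) :=
    (measurePreserving_sub_prod volume volume).quasiMeasurePreserving
  have hkernel : AEStronglyMeasurable (fun z : Euc n × Euc n => ρ (z.1 - z.2))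
      (volume.prod volume) :=
    hρ.comp_fst.comp_quasiMeasurePreserving hshift
  have hquot : Measurable
      (fun z : Euc n × Euc n => ⟪φ z.1 - φ z.2, z.1 - z.2⟫_ℝ / ‖z.1 - z.2‖ ^ 2) :=
    (by fun_prop : Continuous fun z : Euc n × Euc n => ⟪φ z.1 - φ z.2, z.1 - z.2⟫_ℝ).measurable.div
      (by fun_prop : Continuous fun z : Euc n × Euc n => ‖z.1 - z.2‖ ^ 2).measurable
  have hintegrand : AEStronglyMeasurable (fun z : Euc n × Euc n =>
      ⟪φ z.1 - φ z.2, z.1 - z.2⟫_ℝ * ρ (z.1 - z.2) / ‖z.1 - z.2‖ ^ 2) (volume.prod volume) :=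
    (hquot.aestronglyMeasurable.mul hkernel).congr
      (ae_of_all _ fun z => by simp only [Pi.mul_apply]; ring)
  exact hintegrand.integral_prod_right'

lemma exists_abs_nlDiv_le (hρ : Integrable (fun z : Euc n => min 1 ‖z‖⁻¹ * ρ z))
    (hφ : ContDiff ℝ (⊤ : ℕ∞) φ) (hφs : HasCompactSupport φ) :
    ∃ C, ∀ x, |nlDiv n ρ φ x| ≤ C := by
  obtain ⟨L, hL⟩ := ContDiff.lipschitzWith_of_hasCompactSupport hφs hφ (by simp)
  obtain ⟨M, hM⟩ := hφ.continuous.bounded_above_of_compact_support hφs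
  refine ⟨max (L : ℝ) (2 * M) * ∫ z, ‖min 1 ‖z‖⁻¹ * ρ z‖, fun x => ?_⟩
  rw [← Real.norm_eq_abs, ← integral_sub_left_eq_self _ volume x, ← integral_const_mul]
  refine norm_integral_le_of_norm_le ((hρ.norm.comp_sub_left x).const_mul _)
    (ae_of_all _ fun y => norm_inner_mul_div_norm_sq_le ?_)
  simpa only [dist_eq_norm] using hL.norm_sub_le_mul_min hM x y

lemma MeasureTheory.Integrable.mul_nlDiv {u : Euc n → ℝ} (hu : Integrable u)
    (hρm : AEStronglyMeasurable ρ volume) (hρ : Integrable (fun z : Euc n => min 1 ‖z‖⁻¹ * ρ z))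
    (hφ : ContDiff ℝ (⊤ : ℕ∞) φ) (hφs : HasCompactSupport φ) :
    Integrable (fun x => u x * nlDiv n ρ φ x) := by
  obtain ⟨C, hC⟩ := exists_abs_nlDiv_le hρ hφ hφs
  exact hu.mul_bdd (aestronglyMeasurable_nlDiv hρm hφ.continuous) (ae_of_all _ hC)

lemma memX_sub {p : ℝ} (hp : 1 ≤ p) (hρm : AEStronglyMeasurable ρ volume)
    (hρ : Integrable (fun z : Euc n => min 1 ‖z‖⁻¹ * ρ z)) {Ω : Set (Euc n)}
    (hΩ : Bornology.IsBounded Ω) {u₁ u₂ : Euc n → ℝ} {g₁ g₂ : Euc n → Euc n}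
    (h₁ : memX n p ρ Ω u₁ g₁) (h₂ : memX n p ρ Ω u₂ g₂) :
    memX n p ρ Ω (fun x => u₁ x - u₂ x) (fun x => g₁ x - g₂ x) := by
  obtain ⟨hu₁, hg₁, hΩ₁, hweak₁⟩ := h₁
  obtain ⟨hu₂, hg₂, hΩ₂, hweak₂⟩ := h₂
  have hp' : 1 ≤ ENNReal.ofReal p := ENNReal.one_le_ofReal.2 hp
  have hint₁ := hu₁.integrable_of_ae_notMem_eq_zero hp' hΩ.measure_lt_top.ne hΩ₁
  have hint₂ := hu₂.integrable_of_ae_notMem_eq_zero hp' hΩ.measure_lt_top.ne hΩ₂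
  refine ⟨hu₁.sub hu₂, hg₁.sub hg₂, ?_, fun φ hφ hφs => ?_⟩
  · filter_upwards [hΩ₁, hΩ₂] with x hx₁ hx₂ hx
    rw [hx₁ hx, hx₂ hx, sub_zero]
  · simp_rw [inner_sub_left, sub_mul]
    rw [integral_sub (hg₁.integrable_inner_of_hasCompactSupport hp' hφ.continuous hφs)
        (hg₂.integrable_inner_of_hasCompactSupport hp' hφ.continuous hφs),
      integral_sub (hint₁.mul_nlDiv hρm hρ hφ hφs) (hint₂.mul_nlDiv hρm hρ hφ hφs),
      hweak₁ φ hφ hφs, hweak₂ φ hφ hφs]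
    ring

end NonlocalDivergence

end

theorem nonlocal_pLaplacian_dirichlet_uniqueness_general
    (n : ℕ) (Ω : Set (Euc n)) (hΩb : Bornology.IsBounded Ω)
    (p : ℝ) (hp : 1 < p)
    (f : Euc n → ℝ)
    (ρ : Euc n → ℝ) (ρb : ℝ → ℝ) (ε : ℝ) (hρ : H0 n ρ ρb ε)
    (c : ℝ)
    (hPoincare : ∀ u g, memX n p ρ Ω u g →
      (∫ x in Ω, |u x| ^ p) ^ (1 / p) ≤ c * (∫ x : Euc n, ‖g x‖ ^ p) ^ (1 / p))
    (u₁ u₂ : Euc n → ℝ) (g₁ g₂ : Euc n → Euc n)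
    (h₁ : memX n p ρ Ω u₁ g₁) (h₂ : memX n p ρ Ω u₂ g₂)
    (hsol₁ : ∀ v h, memX n p ρ Ω v h →
      ∫ x : Euc n, ‖g₁ x‖ ^ (p - 2) * (inner ℝ (g₁ x) (h x) : ℝ) = ∫ x in Ω, f x * v x)
    (hsol₂ : ∀ v h, memX n p ρ Ω v h →
      ∫ x : Euc n, ‖g₂ x‖ ^ (p - 2) * (inner ℝ (g₂ x) (h x) : ℝ) = ∫ x in Ω, f x * v x) :
    u₁ =ᵐ[volume] u₂ ∧ g₁ =ᵐ[volume] g₂ := by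
  have hw := memX_sub hp.le hρ.2.2.1.aestronglyMeasurable hρ.2.2.2.1 hΩb h₁ h₂
  have hg : g₁ =ᵐ[volume] g₂ :=
    ae_eq_of_integral_pLaplace_eq hp h₁.2.1 h₂.2.1 ((hsol₁ _ _ hw).trans (hsol₂ _ _ hw).symm)
  have hgrad : ∫ x, ‖g₁ x - g₂ x‖ ^ p = 0 := integral_eq_zero_of_ae <| by
    filter_upwards [hg] with x hx
    simp [hx, Real.zero_rpow (by linarith : p ≠ 0)]
  have hu : ∫ x in Ω, |u₁ x - u₂ x| ^ p = 0 := by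
    have hnonneg : 0 ≤ ∫ x in Ω, |u₁ x - u₂ x| ^ p := integral_nonneg fun x => by positivity
    have hle := hPoincare _ _ hw
    rw [hgrad, Real.zero_rpow (by positivity), mul_zero] at hle
    exact ((Real.rpow_eq_zero_iff_of_nonneg hnonneg).1
      (le_antisymm hle (Real.rpow_nonneg hnonneg _))).1
  exact ⟨(sub_ae_eq_zero _ _).1
    (ae_eq_zero_of_setIntegral_abs_rpow_eq_zero (by linarith) (h₁.1.sub h₂.1) hw.2.2.1 hu), hg⟩

/-- Uniqueness of weak solutions of the nonlocal `p`-Laplacian Dirichlet problem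
(with `|g|^{p−2} g = 0` where `g = 0`, as realized by the real power). -/
theorem nonlocal_pLaplacian_dirichlet_uniqueness
    (n : ℕ) (Ω : Set (Euc n)) (hΩo : IsOpen Ω) (hΩb : Bornology.IsBounded Ω)
    (p q : ℝ) (hp : 1 < p) (hq : 1 < q) (hpq : 1 / p + 1 / q = 1)
    (f : Euc n → ℝ) (hf : MemLp f (ENNReal.ofReal q) (volume.restrict Ω))
    (ρ : Euc n → ℝ) (ρb : ℝ → ℝ) (ε : ℝ) (hε : 0 < ε) (hρ : H0 n ρ ρb ε)
    (c : ℝ) (hc : 0 < c)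
    (hPoincare : ∀ u g, memX n p ρ Ω u g →
      (∫ x in Ω, |u x| ^ p) ^ (1 / p) ≤ c * (∫ x : Euc n, ‖g x‖ ^ p) ^ (1 / p))
    (u₁ u₂ : Euc n → ℝ) (g₁ g₂ : Euc n → Euc n)
    (h₁ : memX n p ρ Ω u₁ g₁) (h₂ : memX n p ρ Ω u₂ g₂)
    (hsol₁ : ∀ v h, memX n p ρ Ω v h →
      ∫ x : Euc n, ‖g₁ x‖ ^ (p - 2) * (inner ℝ (g₁ x) (h x) : ℝ) = ∫ x in Ω, f x * v x)
    (hsol₂ : ∀ v h, memX n p ρ Ω v h →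
      ∫ x : Euc n, ‖g₂ x‖ ^ (p - 2) * (inner ℝ (g₂ x) (h x) : ℝ) = ∫ x in Ω, f x * v x) :
    u₁ =ᵐ[volume] u₂ ∧ g₁ =ᵐ[volume] g₂ :=
  nonlocal_pLaplacian_dirichlet_uniqueness_general n Ω hΩb p hp f ρ ρb ε hρ c hPoincare u₁ u₂ g₁ g₂
    h₁ h₂ hsol₁ hsol₂
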